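/- Let X be a nonnegative, infinitely divisible random variable with a = E[X] ∈ (0,∞), and suppose Ẋ =ᵈ X + A where Ẋ is the X-size-biased transform of X and A is a strictly positive random variable independent of X. Then for all λ ≥ 0, -ln E[e^{-λX}] = a ∫₀^λ E[e^{-sA}] ds. -/

import Mathlib

open MeasureTheory ProbabilityTheory

/-- The law of the `X`-size-biased transform of a random variable with law `μ`
and mean `a`: `dν(x) = x dμ(x) / a`. -/
noncomputable def sizeBiasedLaw (μ : Measure ℝ) (a : ℝ) : Measure ℝ :=
  (ENNReal.ofReal a)⁻¹ • μ.withDensity (fun x => ENNReal.ofReal x)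

/-- `n`-fold convolution power of a measure on `ℝ`. -/
noncomputable def convIter (ρ : Measure ℝ) : ℕ → Measure ℝ
  | 0 => Measure.dirac 0
  | n + 1 => Measure.conv (convIter ρ n) ρ

/-!
Write `Φ(s) = E[e^{-sX}]` and `Ψ(s) = E[e^{-sA}]`. Differentiating under the integral,
`Φ'(s) = -E[X e^{-sX}] = -a E[e^{-sẊ}]`, and `Ẋ =ᵈ X + A` with `A` independent of `X` turns
this into `-a Φ(s) Ψ(s)`. Hence `(-log Φ)' = a Ψ` on `(0, ∞)`, and the identity follows by
integrating from `0`, where `Φ(0) = 1`.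
-/

open Real Set

lemma integral_sizeBiasedLaw {μ : Measure ℝ} {a : ℝ} (ha : 0 ≤ a) (hμ : ∀ᵐ x ∂μ, 0 ≤ x)
    (g : ℝ → ℝ) : ∫ x, g x ∂sizeBiasedLaw μ a = a⁻¹ * ∫ x, x * g x ∂μ := by
  rw [sizeBiasedLaw, integral_smul_measure, ENNReal.toReal_inv, ENNReal.toReal_ofReal ha,
    smul_eq_mul]
  change a⁻¹ * ∫ x, g x ∂μ.withDensity (fun x => (Real.toNNReal x : ENNReal)) = _
  rw [integral_withDensity_eq_integral_smul measurable_real_toNNReal]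
  congr 1
  refine integral_congr_ae ?_
  filter_upwards [hμ] with x hx
  rw [NNReal.smul_def, Real.coe_toNNReal _ hx, smul_eq_mul]

namespace ProbabilityTheory

variable {Ω : Type*} [MeasurableSpace Ω] {μ : Measure Ω} {X : Ω → ℝ} {t : ℝ}

lemma Iic_subset_integrableExpSet [IsFiniteMeasure μ] (hX : AEMeasurable X μ)
    (hX0 : 0 ≤ᵐ[μ] X) : Iic 0 ⊆ integrableExpSet X μ := by
  intro t ht
  refine Integrable.mono' (integrable_const 1) (aemeasurable_exp_mul t hX) ?_
  filter_upwards [hX0] with ω hω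
  rw [norm_eq_abs, abs_exp, exp_le_one_iff]
  exact mul_nonpos_of_nonpos_of_nonneg ht hω

lemma Iio_subset_interior_integrableExpSet [IsFiniteMeasure μ] (hX : AEMeasurable X μ)
    (hX0 : 0 ≤ᵐ[μ] X) : Iio 0 ⊆ interior (integrableExpSet X μ) :=
  isOpen_Iio.subset_interior_iff.mpr <|
    Iio_subset_Iic_self.trans (Iic_subset_integrableExpSet hX hX0)

lemma continuousOn_mgf_Iic [IsFiniteMeasure μ] (hX : AEMeasurable X μ) (hX0 : 0 ≤ᵐ[μ] X) :
    ContinuousOn (mgf X μ) (Iic 0) := by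
  refine continuousOn_of_dominated (bound := fun _ => 1)
    (fun t _ => aemeasurable_exp_mul t hX) (fun t ht => ?_)
    (integrable_const 1) (.of_forall fun ω => by fun_prop)
  filter_upwards [hX0] with ω hω
  rw [norm_eq_abs, abs_exp, exp_le_one_iff]
  exact mul_nonpos_of_nonpos_of_nonneg ht hω

lemma hasDerivAt_cgf [IsProbabilityMeasure μ] (ht : t ∈ interior (integrableExpSet X μ)) :
    HasDerivAt (cgf X μ) (μ[fun ω => X ω * exp (t * X ω)] / mgf X μ t) t :=
  (hasDerivAt_mgf ht).log (mgf_pos (interior_subset ht : t ∈ integrableExpSet X μ)).ne'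

lemma continuousOn_cgf_Iic [IsProbabilityMeasure μ] (hX : AEMeasurable X μ) (hX0 : 0 ≤ᵐ[μ] X) :
    ContinuousOn (cgf X μ) (Iic 0) :=
  (continuousOn_mgf_Iic hX hX0).log fun _ ht =>
    (mgf_pos (Iic_subset_integrableExpSet hX hX0 ht)).ne'

lemma integral_mul_exp_eq_mul_mgf_mul_mgf {A : Ω → ℝ} {a : ℝ} (hX : AEMeasurable X μ)
    (hA : AEMeasurable A μ) (hX0 : 0 ≤ᵐ[μ] X) (ha : 0 < a) (hXA : X ⟂ᵢ[μ] A)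
    (hsb : μ.map (fun ω => X ω + A ω) = sizeBiasedLaw (μ.map X) a) (t : ℝ) :
    μ[fun ω => X ω * exp (t * X ω)] = a * (mgf X μ t * mgf A μ t) := by
  have h_map : mgf (X + A) μ t = a⁻¹ * μ[fun ω => X ω * exp (t * X ω)] := by
    rw [← mgf_id_map (hX.add hA)]
    change ∫ x, exp (t * x) ∂μ.map (fun ω => X ω + A ω) = _
    rw [hsb, integral_sizeBiasedLaw ha.le ((ae_map_iff hX measurableSet_Ici).2 hX0),
      integral_map hX (by fun_prop)]
  rw [← inv_mul_eq_iff_eq_mul₀ ha.ne', ← h_map,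
    hXA.mgf_add' hX.aestronglyMeasurable hA.aestronglyMeasurable]

end ProbabilityTheory

theorem stmt_14_general {Ω : Type*} [MeasureSpace Ω] (P : Measure Ω) [IsProbabilityMeasure P]
    (X A : Ω → ℝ) (hX : Measurable X) (hA : Measurable A)
    (hX_nonneg : ∀ ω, 0 ≤ X ω) (hA_pos : ∀ᵐ ω ∂P, 0 < A ω)
    (a : ℝ) (ha : 0 < a)
    (h_indep : IndepFun X A P)
    (h_sb : P.map (fun ω => X ω + A ω) = sizeBiasedLaw (P.map X) a) :
    ∀ l : ℝ, 0 ≤ l →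
      -Real.log (∫ ω, Real.exp (-l * X ω) ∂P) =
        a * ∫ s in (0:ℝ)..l, ∫ ω, Real.exp (-s * A ω) ∂P := by
  intro l hl
  have hX0 : 0 ≤ᵐ[P] X := .of_forall hX_nonneg
  have hA0 : 0 ≤ᵐ[P] A := hA_pos.mono fun _ h => h.le
  have h_deriv : ∀ s ∈ Ioo 0 l, HasDerivAt (fun s => -cgf X P (-s)) (a * mgf A P (-s)) s := by
    intro s hs
    have h_mem := Iio_subset_interior_integrableExpSet hX.aemeasurable hX0 (neg_lt_zero.2 hs.1)
    have h := ((hasDerivAt_cgf h_mem).comp s (hasDerivAt_neg s)).neg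
    rw [integral_mul_exp_eq_mul_mgf_mul_mgf hX.aemeasurable hA.aemeasurable hX0 ha h_indep h_sb]
      at h
    refine h.congr_deriv ?_
    field_simp [(mgf_pos (interior_subset h_mem : -s ∈ integrableExpSet X P)).ne']
  have h_cont : ContinuousOn (fun s => -cgf X P (-s)) (Icc 0 l) :=
    ((continuousOn_cgf_Iic hX.aemeasurable hX0).comp continuousOn_neg
      fun s hs => neg_nonpos.2 hs.1).neg
  have h_int : IntervalIntegrable (fun s => a * mgf A P (-s)) volume 0 l :=
    ContinuousOn.intervalIntegrable_of_Icc hl <| continuousOn_const.mul <|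
      (continuousOn_mgf_Iic hA.aemeasurable hA0).comp continuousOn_neg
        fun s hs => neg_nonpos.2 hs.1
  have h_ftc := intervalIntegral.integral_eq_sub_of_hasDerivAt_of_le hl h_cont h_deriv h_int
  rw [intervalIntegral.integral_const_mul, neg_zero, cgf_zero, neg_zero, sub_zero] at h_ftc
  exact h_ftc.symm

theorem stmt_14 {Ω : Type*} [MeasureSpace Ω] (P : Measure Ω) [IsProbabilityMeasure P]
    (X A : Ω → ℝ) (hX : Measurable X) (hA : Measurable A)
    (hX_nonneg : ∀ ω, 0 ≤ X ω) (hA_pos : ∀ᵐ ω ∂P, 0 < A ω)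
    (hX_int : Integrable X P) (a : ℝ) (ha : 0 < a) (ha_eq : ∫ ω, X ω ∂P = a)
    (h_infdiv : ∀ n : ℕ, 0 < n → ∃ ρ : Measure ℝ,
      IsProbabilityMeasure ρ ∧ P.map X = convIter ρ n)
    (h_indep : IndepFun X A P)
    (h_sb : P.map (fun ω => X ω + A ω) = sizeBiasedLaw (P.map X) a) :
    ∀ l : ℝ, 0 ≤ l →
      -Real.log (∫ ω, Real.exp (-l * X ω) ∂P) =
        a * ∫ s in (0:ℝ)..l, ∫ ω, Real.exp (-s * A ω) ∂P :=
  stmt_14_general P X A hX hA hX_nonneg hA_pos a ha h_indep h_sb
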